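/- With R the tilt of O_{ℂp}, define v_R(r) = lim_{n→∞} pⁿ·v_p(oₙ) for r = (oₙ mod p)ₙ, where v_p is the p-adic valuation normalized by v_p(p) = 1. Then v_R(r) = v_p(r^(0)), and v_R is a valuation on R: v_R(r·s) = v_R(r) + v_R(s) and v_R(r+s) ≥ min(v_R(r), v_R(s)). -/
import Mathlib


open Filter Topology IsUltrametricDist

lemma step_pow (p : ℕ) (hp : p.Prime) {K : Type*} [NontriviallyNormedField K]
    [IsUltrametricDist K] (hpK1 : ‖(p : K)‖ ≤ 1)
    {x y : K} (hy : ‖y‖ ≤ 1) (hxy : ‖x - y‖ ≤ ‖(p : K)‖) :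
    ‖x ^ p - y ^ p‖ ≤ ‖(p : K)‖ * ‖x - y‖ := by
  have hd1 : ‖x - y‖ ≤ 1 := hxy.trans hpK1
  have hexp : x ^ p = ∑ k ∈ Finset.range (p + 1),
      (x - y) ^ k * y ^ (p - k) * (p.choose k : K) := by
    simpa using add_pow (x - y) y p
  have hkey : x ^ p - y ^ p = ∑ k ∈ Finset.range p,
      (x - y) ^ (k + 1) * y ^ (p - (k + 1)) * (p.choose (k + 1) : K) := by
    rw [hexp, Finset.sum_range_succ']
    simp
  rw [hkey]
  apply norm_sum_le_of_forall_le_of_nonneg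
    (mul_nonneg (norm_nonneg _) (norm_nonneg _))
  intro k hk
  rw [Finset.mem_range] at hk
  have hdk : ‖(x - y) ^ (k + 1)‖ ≤ ‖x - y‖ := by
    rw [norm_pow]
    exact pow_le_of_le_one (norm_nonneg _) hd1 (Nat.succ_ne_zero k)
  by_cases hkp : k + 1 = p
  · -- top term: choose p p = 1, need ‖x-y‖^p ≤ ‖p‖ * ‖x-y‖
    have h2 : 2 ≤ p := hp.two_le
    rw [hkp, Nat.choose_self, Nat.sub_self]
    calc ‖(x - y) ^ p * y ^ 0 * ((1 : ℕ) : K)‖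
        = ‖x - y‖ ^ p := by simp
      _ = ‖x - y‖ ^ (p - 1) * ‖x - y‖ := by
          rw [← pow_succ]; congr 1; omega
      _ ≤ ‖(p : K)‖ * ‖x - y‖ := by
          gcongr
          calc ‖x - y‖ ^ (p - 1) ≤ ‖x - y‖ ^ 1 :=
                pow_le_pow_of_le_one (norm_nonneg _) hd1 (by omega)
            _ ≤ ‖(p : K)‖ := by simpa using hxy
  · have hdvd : p ∣ p.choose (k + 1) := hp.dvd_choose_self (Nat.succ_ne_zero k) (by omega)
    obtain ⟨t, ht⟩ := hdvd
    have hcast : ((p.choose (k + 1) : ℕ) : K) = (p : K) * (t : K) := by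
      rw [ht]; push_cast; ring
    calc ‖(x - y) ^ (k + 1) * y ^ (p - (k + 1)) * (p.choose (k + 1) : K)‖
        = ‖(x - y) ^ (k + 1)‖ * ‖y ^ (p - (k + 1))‖ * (‖(p : K)‖ * ‖(t : K)‖) := by
          rw [hcast, norm_mul, norm_mul, norm_mul]
      _ ≤ ‖x - y‖ * 1 * (‖(p : K)‖ * 1) := by
          gcongr
          · rw [norm_pow]; exact pow_le_one₀ (norm_nonneg _) hy
          · exact norm_natCast_le_one K t
      _ = ‖(p : K)‖ * ‖x - y‖ := by ring
open IsUltrametricDist in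
private lemma iter_pow (p : ℕ) (hp : p.Prime) {K : Type*} [NontriviallyNormedField K]
    [IsUltrametricDist K] (hpK1 : ‖(p : K)‖ ≤ 1)
    {x y : K} (hx : ‖x‖ ≤ 1) (hy : ‖y‖ ≤ 1) (hxy : ‖x - y‖ ≤ ‖(p : K)‖) (n : ℕ) :
    ‖x ^ p ^ n - y ^ p ^ n‖ ≤ ‖(p : K)‖ ^ n * ‖x - y‖ := by
  induction n with
  | zero => simp
  | succ n ih =>
    have hyn : ‖y ^ p ^ n‖ ≤ 1 := by
      rw [norm_pow]; exact pow_le_one₀ (norm_nonneg _) hy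
    have hlt : ‖x ^ p ^ n - y ^ p ^ n‖ ≤ ‖(p : K)‖ := by
      refine ih.trans ?_
      calc ‖(p : K)‖ ^ n * ‖x - y‖ ≤ 1 * ‖(p : K)‖ := by
            gcongr
            exact pow_le_one₀ (norm_nonneg _) hpK1
        _ = ‖(p : K)‖ := one_mul _
    have hstep := step_pow p hp hpK1 hyn hlt
    calc ‖x ^ p ^ (n + 1) - y ^ p ^ (n + 1)‖
        = ‖(x ^ p ^ n) ^ p - (y ^ p ^ n) ^ p‖ := by
          rw [← pow_mul, ← pow_mul, ← pow_succ]
      _ ≤ ‖(p : K)‖ * ‖x ^ p ^ n - y ^ p ^ n‖ := hstep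
      _ ≤ ‖(p : K)‖ * (‖(p : K)‖ ^ n * ‖x - y‖) := by gcongr
      _ = ‖(p : K)‖ ^ (n + 1) * ‖x - y‖ := by ring


/-- In multiplicative form: for elements `r, s` of the tilt `R = lim←(O/p)` given by
compatible systems of lifts `o, e` (and lifts `c` of `r + s`, `m` of `r·s`), with
sharps `A = r^(0)`, `B = s^(0)`, `C = (r+s)^(0)`, `M = (r·s)^(0)` (the limits of
`oₙ^(pⁿ)` etc.), one has `v_R(r) = v_p(r^(0))`, i.e. `‖oₙ‖^(pⁿ) → ‖A‖`
(the multiplicative form of `lim pⁿ·v_p(oₙ) = v_p(r^(0))`), and `v_R` is a valuation: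
`v_R(r·s) = v_R(r) + v_R(s)` (i.e. `‖M‖ = ‖A‖·‖B‖`) and
`v_R(r+s) ≥ min(v_R(r), v_R(s))` (i.e. `‖C‖ ≤ max ‖A‖ ‖B‖`). -/
theorem stmt5 (p : ℕ) (hp : p.Prime) (K : Type*) [NontriviallyNormedField K]
    [CompleteSpace K] [IsUltrametricDist K]
    (hpK0 : 0 < ‖(p : K)‖) (hpK1 : ‖(p : K)‖ < 1)
    (o e c m : ℕ → K)
    (ho1 : ∀ n, ‖o n‖ ≤ 1) (he1 : ∀ n, ‖e n‖ ≤ 1)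
    (hc1 : ∀ n, ‖c n‖ ≤ 1) (hm1 : ∀ n, ‖m n‖ ≤ 1)
    (hoc : ∀ n, ‖o (n + 1) ^ p - o n‖ ≤ ‖(p : K)‖)
    (hec : ∀ n, ‖e (n + 1) ^ p - e n‖ ≤ ‖(p : K)‖)
    (hcc : ∀ n, ‖c (n + 1) ^ p - c n‖ ≤ ‖(p : K)‖)
    (hmc : ∀ n, ‖m (n + 1) ^ p - m n‖ ≤ ‖(p : K)‖)
    (hsum : ∀ n, ‖c n - (o n + e n)‖ ≤ ‖(p : K)‖)
    (hprod : ∀ n, ‖m n - o n * e n‖ ≤ ‖(p : K)‖)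
    (A B C M : K)
    (hA : Tendsto (fun n => o n ^ p ^ n) atTop (𝓝 A))
    (hB : Tendsto (fun n => e n ^ p ^ n) atTop (𝓝 B))
    (hC : Tendsto (fun n => c n ^ p ^ n) atTop (𝓝 C))
    (hM : Tendsto (fun n => m n ^ p ^ n) atTop (𝓝 M)) :
    Tendsto (fun n => ‖o n‖ ^ p ^ n) atTop (𝓝 ‖A‖) ∧
      ‖M‖ = ‖A‖ * ‖B‖ ∧ ‖C‖ ≤ max ‖A‖ ‖B‖ := by
  have hpK1' : ‖(p : K)‖ ≤ 1 := hpK1.le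
  -- part 1
  have part1o : Tendsto (fun n => ‖o n‖ ^ p ^ n) atTop (𝓝 ‖A‖) := by
    simpa [norm_pow] using hA.norm
  have part1e : Tendsto (fun n => ‖e n‖ ^ p ^ n) atTop (𝓝 ‖B‖) := by
    simpa [norm_pow] using hB.norm
  refine ⟨part1o, ?_, ?_⟩
  -- part 2 : M = A * B
  · have hdiff : ∀ n, ‖m n ^ p ^ n - (o n * e n) ^ p ^ n‖ ≤ ‖(p : K)‖ ^ n * ‖(p : K)‖ := by
      intro n
      have hoe : ‖o n * e n‖ ≤ 1 := by
        rw [norm_mul]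
        exact mul_le_one₀ (ho1 n) (norm_nonneg _) (he1 n)
      refine (iter_pow p hp hpK1' (hm1 n) hoe (hprod n) n).trans ?_
      gcongr
      exact hprod n
    have hzero : Tendsto (fun n => m n ^ p ^ n - (o n * e n) ^ p ^ n) atTop (𝓝 0) := by
      rw [tendsto_zero_iff_norm_tendsto_zero]
      refine squeeze_zero (fun n => norm_nonneg _) hdiff ?_
      simpa using
        (tendsto_pow_atTop_nhds_zero_of_lt_one (norm_nonneg _) hpK1).mul_const ‖(p : K)‖
    have hMAB : Tendsto (fun n => (o n * e n) ^ p ^ n) atTop (𝓝 M) := by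
      have := hM.sub hzero
      simpa using this
    have hAB : Tendsto (fun n => (o n * e n) ^ p ^ n) atTop (𝓝 (A * B)) := by
      simpa [mul_pow] using hA.mul hB
    have : M = A * B := tendsto_nhds_unique hMAB hAB
    rw [this, norm_mul]
  -- part 3 : ‖C‖ ≤ max ‖A‖ ‖B‖
  · have hub : ∀ n, ‖c n ^ p ^ n‖ ≤
        max (max (‖o n‖ ^ p ^ n) (‖e n‖ ^ p ^ n)) (‖(p : K)‖ ^ n * ‖(p : K)‖) := by
      intro n
      have hoe : ‖o n + e n‖ ≤ 1 :=
        (norm_add_le_max _ _).trans (max_le (ho1 n) (he1 n))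
      have h1 : ‖c n ^ p ^ n - (o n + e n) ^ p ^ n‖ ≤ ‖(p : K)‖ ^ n * ‖(p : K)‖ := by
        refine (iter_pow p hp hpK1' (hc1 n) hoe (hsum n) n).trans ?_
        gcongr
        exact hsum n
      have h2 : ‖(o n + e n) ^ p ^ n‖ ≤ max (‖o n‖ ^ p ^ n) (‖e n‖ ^ p ^ n) := by
        rw [norm_pow]
        rcases le_total ‖o n‖ ‖e n‖ with h | h
        · refine le_trans ?_ (le_max_right _ _)
          exact pow_le_pow_left₀ (norm_nonneg _)
            ((norm_add_le_max _ _).trans (max_le h le_rfl)) _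
        · refine le_trans ?_ (le_max_left _ _)
          exact pow_le_pow_left₀ (norm_nonneg _)
            ((norm_add_le_max _ _).trans (max_le le_rfl h)) _
      calc ‖c n ^ p ^ n‖
          = ‖(c n ^ p ^ n - (o n + e n) ^ p ^ n) + (o n + e n) ^ p ^ n‖ := by
            rw [sub_add_cancel]
        _ ≤ max ‖c n ^ p ^ n - (o n + e n) ^ p ^ n‖ ‖(o n + e n) ^ p ^ n‖ :=
            norm_add_le_max _ _
        _ ≤ max (max (‖o n‖ ^ p ^ n) (‖e n‖ ^ p ^ n)) (‖(p : K)‖ ^ n * ‖(p : K)‖) :=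
            max_le (h1.trans (le_max_right _ _)) (h2.trans (le_max_left _ _))
    have hL : Tendsto
        (fun n => max (max (‖o n‖ ^ p ^ n) (‖e n‖ ^ p ^ n)) (‖(p : K)‖ ^ n * ‖(p : K)‖))
        atTop (𝓝 (max (max ‖A‖ ‖B‖) 0)) := by
      refine (part1o.max part1e).max ?_
      simpa using
        (tendsto_pow_atTop_nhds_zero_of_lt_one (norm_nonneg _) hpK1).mul_const ‖(p : K)‖
    have hCle : ‖C‖ ≤ max (max ‖A‖ ‖B‖) 0 :=
      le_of_tendsto_of_tendsto' hC.norm hL hub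
    calc ‖C‖ ≤ max (max ‖A‖ ‖B‖) 0 := hCle
      _ = max ‖A‖ ‖B‖ :=
        max_eq_left ((norm_nonneg A).trans (le_max_left _ _))
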